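/- arXiv:1812.10843 — 3 statements merged into one kernel-verified Lean document; each statement's English description precedes it below -/
import Mathlib

section
/- Let a > 0 and let d ≥ e ≥ 0 be real numbers. For the rank-1 diffusion tensor D = diag(a,0,0), the orientationally-averaged signals for rank-2 measurement tensors satisfy S̄(diag(a,0,0), diag(d,d,0)) ≤ S̄(diag(a,0,0), diag(d,e,0)) ≤ S̄(diag(a,0,0), diag(e,e,0)). -/
open Matrix MeasureTheory

noncomputable section

abbrev Mat3 := Matrix (Fin 3) (Fin 3) ℝ

/-- The special orthogonal group SO(3) as a submonoid of 3×3 real matrices: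
matrices `R` with `Rᵀ * R = 1` and `det R = 1`. -/
def SO3 : Submonoid Mat3 where
  carrier := {R | Rᵀ * R = 1 ∧ R.det = 1}
  one_mem' := ⟨by simp, by simp⟩
  mul_mem' := by
    rintro A B ⟨hA1, hA2⟩ ⟨hB1, hB2⟩
    refine ⟨?_, by rw [Matrix.det_mul, hA2, hB2, one_mul]⟩
    rw [Matrix.transpose_mul, Matrix.mul_assoc, ← Matrix.mul_assoc Aᵀ, hA1, Matrix.one_mul, hB1]

instance : Group SO3 :=
  { (inferInstance : Monoid SO3) with
    inv := fun A => ⟨A.1ᵀ, by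
      refine ⟨?_, by rw [Matrix.det_transpose]; exact A.2.2⟩
      rw [Matrix.transpose_transpose, mul_eq_one_comm]
      exact A.2.1⟩
    inv_mul_cancel := fun A => Subtype.ext A.2.1 }

instance : IsTopologicalGroup SO3 where
  continuous_mul := Continuous.subtype_mk
    (((continuous_subtype_val.comp continuous_fst).matrix_mul
      (continuous_subtype_val.comp continuous_snd))) _
  continuous_inv := Continuous.subtype_mk continuous_subtype_val.matrix_transpose _

theorem SO3_isCompact : IsCompact (SO3 : Set Mat3) := by
  have hsub : (SO3 : Set Mat3) ⊆
      Set.univ.pi (fun _ : Fin 3 => Set.univ.pi fun _ : Fin 3 => Set.Icc (-1:ℝ) 1) := by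
    rintro R ⟨hR1, -⟩
    refine Set.mem_univ_pi.mpr fun i => Set.mem_univ_pi.mpr fun j => ?_
    have h1 : (Rᵀ * R) j j = (1 : Mat3) j j := by rw [hR1]
    have h2 : ∑ k, R k j ^ 2 = 1 := by
      simpa [Matrix.mul_apply, Matrix.transpose_apply, Matrix.one_apply, sq] using h1
    have h3 : R i j ^ 2 ≤ 1 := by
      rw [← h2]
      exact Finset.single_le_sum (fun k _ => sq_nonneg (R k j)) (Finset.mem_univ i)
    exact Set.mem_Icc.mpr (abs_le.mp ((sq_le_one_iff_abs_le_one (a := R i j)).mp h3))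
  exact IsCompact.of_isClosed_subset
    (isCompact_univ_pi fun _ => isCompact_univ_pi fun _ => isCompact_Icc)
    (IsClosed.inter
      (isClosed_singleton.preimage (continuous_id.matrix_transpose.matrix_mul continuous_id))
      (isClosed_singleton.preimage continuous_id.matrix_det))
    hsub

instance : CompactSpace SO3 := isCompact_iff_compactSpace.mp SO3_isCompact

instance : MeasurableSpace SO3 := borel _
instance : BorelSpace SO3 := ⟨rfl⟩

/-- The Haar probability measure on the compact group SO(3)
(normalized so that the whole group has measure 1). -/
def μSO3 : Measure SO3 := Measure.haarMeasure ⊤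

/-- The orientationally-averaged signal
`S̄(D,B) = ∫_{SO(3)} exp(−tr(D·R·B·Rᵀ)) dμ(R)`. -/
def Sbar (D B : Mat3) : ℝ :=
  ∫ R : SO3, Real.exp (-(D * R.1 * B * R.1ᵀ).trace) ∂μSO3

/-- `dg a b c` is the diagonal 3×3 matrix with diagonal entries `a`, `b`, `c`. -/
def dg (x y z : ℝ) : Mat3 := Matrix.diagonal ![x, y, z]

/-- The error function `erf x = (2/√π) ∫₀ˣ exp(−t²) dt`. -/
def erf (x : ℝ) : ℝ := (2 / Real.sqrt Real.pi) * ∫ t in (0:ℝ)..x, Real.exp (-t^2)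

/-- The rising factorial (Pochhammer symbol) `(q)ₖ = q(q+1)⋯(q+k−1)`. -/
def poch (q : ℝ) (k : ℕ) : ℝ := (ascPochhammer ℝ k).eval q

/-- The Gauss hypergeometric polynomial `₂F₁(1/2, −n; 1; x) = ∑_{k=0}^n ((1/2)ₖ(−n)ₖ/((1)ₖ k!)) xᵏ`. -/
def F21half (n : ℕ) (x : ℝ) : ℝ :=
  ∑ k ∈ Finset.range (n+1),
    (poch (1/2) k * poch (-(n:ℝ)) k) / (poch 1 k * (Nat.factorial k)) * x^k

/-- The confluent hypergeometric function `₁F₁(α; β; x) = ∑ₖ ((α)ₖ/(β)ₖ) xᵏ/k!`. -/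
def F11 (α β x : ℝ) : ℝ := ∑' k : ℕ, (poch α k / poch β k) * x^k / (Nat.factorial k)

/-- The modified Bessel function of the first kind of integer order `m`:
`I_m(x) = ∑ⱼ (x/2)^{m+2j}/(j!(m+j)!)`. -/
def besselI (m : ℕ) (x : ℝ) : ℝ :=
  ∑' j : ℕ, (x/2)^(m+2*j) / ((Nat.factorial j) * (Nat.factorial (m+j)))

/-- The regularized Gauss hypergeometric function
`₂F̃₁(α, β; γ; x) = ∑ₖ (α)ₖ(β)ₖ xᵏ/(Γ(γ+k) k!)`, with `1/Γ` vanishing at nonpositive integers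
(note `Real.Gamma` is defined to be `0` there, and `x/0 = 0` in Lean). -/
def regF21 (α β γ x : ℝ) : ℝ :=
  ∑' k : ℕ, (poch α k * poch β k) * x^k / (Real.Gamma (γ + k) * (Nat.factorial k))

end

/-! For `D = diag p` with `p ≥ 0` and `B = diag q`, pointwise on `SO(3)` the exponent
`tr(D R B Rᵀ) = ∑ᵢⱼ pᵢ qⱼ Rᵢⱼ²` is monotone in `q`, so the averaged signal is antitone in `q`. -/

theorem Matrix.trace_diagonal_mul_mul_diagonal_mul_transpose {n α : Type*} [Fintype n]
    [DecidableEq n] [CommRing α] (p q : n → α) (R : Matrix n n α) :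
    (diagonal p * R * diagonal q * Rᵀ).trace = ∑ i, ∑ j, p i * q j * R i j ^ 2 := by
  simp only [Matrix.trace, Matrix.diag, Matrix.mul_apply (M := diagonal p * R * diagonal q),
    Matrix.mul_diagonal, Matrix.diagonal_mul, Matrix.transpose_apply]
  exact Finset.sum_congr rfl fun i _ => Finset.sum_congr rfl fun j _ => by ring

instance : IsProbabilityMeasure μSO3 :=
  ⟨Measure.haarMeasure_self (K₀ := ⊤)⟩

theorem integrable_exp_neg_trace (D B : Mat3) :
    Integrable (fun R : SO3 => Real.exp (-(D * R.1 * B * R.1ᵀ).trace)) μSO3 := by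
  refine Continuous.integrable_of_hasCompactSupport ?_ (HasCompactSupport.of_compactSpace _)
  exact Real.continuous_exp.comp (Continuous.matrix_trace
    (((continuous_const.matrix_mul continuous_subtype_val).matrix_mul
      continuous_const).matrix_mul continuous_subtype_val.matrix_transpose)).neg

theorem Sbar_le_Sbar_of_trace_le {D B D' B' : Mat3}
    (h : ∀ R ∈ SO3, (D' * R * B' * Rᵀ).trace ≤ (D * R * B * Rᵀ).trace) :
    Sbar D B ≤ Sbar D' B' :=
  integral_mono (integrable_exp_neg_trace D B) (integrable_exp_neg_trace D' B') fun R =>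
    Real.exp_le_exp.mpr (neg_le_neg (h R.1 R.2))

theorem Sbar_diagonal_antitone_right {p : Fin 3 → ℝ} (hp : 0 ≤ p) {q q' : Fin 3 → ℝ}
    (hq : q' ≤ q) : Sbar (diagonal p) (diagonal q) ≤ Sbar (diagonal p) (diagonal q') := by
  refine Sbar_le_Sbar_of_trace_le fun R _ => ?_
  simp only [Matrix.trace_diagonal_mul_mul_diagonal_mul_transpose]
  gcongr with i _ j _
  exacts [hp i, hq j]

theorem stmt_11_general (a d e : ℝ) (ha : 0 < a) (hed : e ≤ d) :
    Sbar (dg a 0 0) (dg d d 0) ≤ Sbar (dg a 0 0) (dg d e 0) ∧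
      Sbar (dg a 0 0) (dg d e 0) ≤ Sbar (dg a 0 0) (dg e e 0) := by
  have hstick : 0 ≤ ![a, 0, 0] := fun i => by fin_cases i <;> simp [ha.le]
  have hdd : ![d, e, 0] ≤ ![d, d, 0] := fun i => by fin_cases i <;> simp [hed]
  have hee : ![e, e, 0] ≤ ![d, e, 0] := fun i => by fin_cases i <;> simp [hed]
  exact ⟨Sbar_diagonal_antitone_right hstick hdd, Sbar_diagonal_antitone_right hstick hee⟩

/-- two-sided bound for a stick `D = diag(a,0,0)` and rank-2 measurement tensors. -/
theorem stmt_11 (a d e : ℝ) (ha : 0 < a) (hed : e ≤ d) (he : 0 ≤ e) :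
    Sbar (dg a 0 0) (dg d d 0) ≤ Sbar (dg a 0 0) (dg d e 0) ∧
      Sbar (dg a 0 0) (dg d e 0) ≤ Sbar (dg a 0 0) (dg e e 0) :=
  stmt_11_general a d e ha hed
end

section
/- Let a ≥ b ≥ c > 0 and set D = diag(a,b,c). Then the orientationally-averaged signal for the rank-1 measurement tensors diag(d,0,0) decays exponentially with rate given by the smallest eigenvalue of D: lim_{d → ∞} −(1/d)·log( S̄(D, diag(d,0,0)) ) = c. -/
open Matrix MeasureTheory

/-!
Since `tr (D R diag(d,0,0) Rᵀ) = d · q(R e₁)` with `q` the quadratic form of `D = diag(a,b,c)`,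
the signal is a Laplace-type integral `∫ exp (-d q(R e₁)) dμ`. On unit vectors `q ≥ c`, with
equality at `e₃`, so the integral is at most `exp (-d c)`. Conversely, the Haar measure charges
the nonempty open set `{q(R e₁) < t}` for every `t > c`, so the integral is at least
`μ{q(R e₁) < t} · exp (-d t)`, and `-(1/d) log` of this tends to `t`.
-/

open Filter Topology

section Laplace

variable {X : Type*} [TopologicalSpace X] [MeasurableSpace X] [OpensMeasurableSpace X]
  {μ : Measure X} {f : X → ℝ} {c : ℝ}

lemma integrable_exp_neg_mul_of_le [IsFiniteMeasure μ] (hf : Continuous f) (hc : ∀ x, c ≤ f x)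
    {d : ℝ} (hd : 0 ≤ d) : Integrable (fun x => Real.exp (-(d * f x))) μ := by
  refine Integrable.of_bound (by fun_prop) (Real.exp (-(d * c))) (ae_of_all _ fun x => ?_)
  rw [Real.norm_of_nonneg (Real.exp_pos _).le]
  gcongr
  exact hc x

lemma integral_exp_neg_mul_le [IsProbabilityMeasure μ] (hf : Continuous f) (hc : ∀ x, c ≤ f x)
    {d : ℝ} (hd : 0 ≤ d) : ∫ x, Real.exp (-(d * f x)) ∂μ ≤ Real.exp (-(d * c)) := by
  calc ∫ x, Real.exp (-(d * f x)) ∂μ ≤ ∫ _, Real.exp (-(d * c)) ∂μ :=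
        integral_mono (integrable_exp_neg_mul_of_le hf hc hd) (integrable_const _)
          fun x => by gcongr; exact hc x
    _ = Real.exp (-(d * c)) := by simp

lemma measureReal_mul_exp_le_integral_exp_neg_mul [IsFiniteMeasure μ] (hf : Continuous f)
    (hc : ∀ x, c ≤ f x) (t : ℝ) {d : ℝ} (hd : 0 ≤ d) :
    μ.real {x | f x < t} * Real.exp (-(d * t)) ≤ ∫ x, Real.exp (-(d * f x)) ∂μ := by
  have hU : MeasurableSet {x | f x < t} := (isOpen_lt hf continuous_const).measurableSet
  have hint := integrable_exp_neg_mul_of_le (μ := μ) hf hc hd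
  calc μ.real {x | f x < t} * Real.exp (-(d * t))
      ≤ ∫ x in {x | f x < t}, Real.exp (-(d * f x)) ∂μ := by
        rw [mul_comm]
        exact setIntegral_ge_of_const_le_real hU (measure_ne_top _ _)
          (fun x hx => by gcongr; exact le_of_lt hx) hint.integrableOn
    _ ≤ ∫ x, Real.exp (-(d * f x)) ∂μ :=
        setIntegral_le_integral hint (ae_of_all _ fun x => (Real.exp_pos _).le)

theorem tendsto_neg_inv_mul_log_integral_exp_neg_mul [IsProbabilityMeasure μ]
    [μ.IsOpenPosMeasure] (hf : Continuous f) {x₀ : X} (hmin : ∀ x, f x₀ ≤ f x) :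
    Tendsto (fun d : ℝ => -(1 / d) * Real.log (∫ x, Real.exp (-(d * f x)) ∂μ)) atTop
      (𝓝 (f x₀)) := by
  refine tendsto_order.2 ⟨fun c' hc' => ?_, fun c' hc' => ?_⟩
  · filter_upwards [eventually_gt_atTop 0] with d hd
    have hlog : Real.log (∫ x, Real.exp (-(d * f x)) ∂μ) ≤ -(d * f x₀) := by
      simpa using Real.log_le_log (integral_exp_pos (integrable_exp_neg_mul_of_le hf hmin hd.le))
        (integral_exp_neg_mul_le hf hmin hd.le)
    rw [neg_mul, one_div_mul_eq_div, lt_neg, div_lt_iff₀ hd]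
    linarith [mul_lt_mul_of_pos_left hc' hd]
  · obtain ⟨t, ht₀, htc⟩ := exists_between hc'
    set m := μ.real {x | f x < t}
    have hm : 0 < m :=
      ENNReal.toReal_pos ((isOpen_lt hf continuous_const).measure_pos μ ⟨x₀, ht₀⟩).ne'
        (measure_ne_top _ _)
    have hlim : Tendsto (fun d : ℝ => t - Real.log m / d) atTop (𝓝 t) := by
      simpa using (tendsto_const_nhds (x := t)).sub (tendsto_const_nhds.div_atTop tendsto_id)
    filter_upwards [eventually_gt_atTop 0, hlim.eventually (gt_mem_nhds htc)] with d hd hlt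
    have hlog : Real.log m - d * t ≤ Real.log (∫ x, Real.exp (-(d * f x)) ∂μ) := by
      have := Real.log_le_log (by positivity)
        (measureReal_mul_exp_le_integral_exp_neg_mul hf hmin t hd.le)
      rwa [Real.log_mul hm.ne' (Real.exp_pos _).ne', Real.log_exp, ← sub_eq_add_neg] at this
    refine lt_of_le_of_lt ?_ hlt
    rw [neg_mul, one_div_mul_eq_div, neg_le, le_div_iff₀ hd, neg_mul, sub_mul,
      div_mul_cancel₀ _ hd.ne']
    linarith

end Laplace

instance inst_s13 : IsProbabilityMeasure μSO3 := ⟨by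
  rw [μSO3, ← TopologicalSpace.PositiveCompacts.coe_top (α := SO3)]
  exact Measure.haarMeasure_self⟩

instance : μSO3.IsOpenPosMeasure := by
  rw [μSO3]
  infer_instance

def firstColQuad (a b c : ℝ) (R : SO3) : ℝ :=
  a * R.1 0 0 ^ 2 + b * R.1 1 0 ^ 2 + c * R.1 2 0 ^ 2

lemma continuous_firstColQuad (a b c : ℝ) : Continuous (firstColQuad a b c) := by
  have hentry (i j : Fin 3) : Continuous fun R : SO3 => R.1 i j :=
    continuous_subtype_val.matrix_elem i j
  exact ((continuous_const.mul ((hentry 0 0).pow 2)).add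
    (continuous_const.mul ((hentry 1 0).pow 2))).add (continuous_const.mul ((hentry 2 0).pow 2))

lemma trace_dg_mul_mul_dg_mul_transpose (a b c d : ℝ) (R : SO3) :
    (dg a b c * R.1 * dg d 0 0 * R.1ᵀ).trace = d * firstColQuad a b c R := by
  simp [dg, firstColQuad, Matrix.trace, Matrix.mul_apply, Fin.sum_univ_three]
  ring

lemma Sbar_dg_dg_eq_integral (a b c d : ℝ) :
    Sbar (dg a b c) (dg d 0 0) = ∫ R : SO3, Real.exp (-(d * firstColQuad a b c R)) ∂μSO3 := by
  simp only [Sbar, trace_dg_mul_mul_dg_mul_transpose]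

lemma SO3.sum_sq_firstCol (R : SO3) : R.1 0 0 ^ 2 + R.1 1 0 ^ 2 + R.1 2 0 ^ 2 = 1 := by
  simpa [Matrix.mul_apply, Fin.sum_univ_three, sq] using congrFun (congrFun R.2.1 0) 0

lemma le_firstColQuad {a b c : ℝ} (hba : b ≤ a) (hcb : c ≤ b) (R : SO3) :
    c ≤ firstColQuad a b c R := by
  have hexcess : firstColQuad a b c R - c = (a - c) * R.1 0 0 ^ 2 + (b - c) * R.1 1 0 ^ 2 := by
    unfold firstColQuad
    linear_combination c * SO3.sum_sq_firstCol R
  have : 0 ≤ (a - c) * R.1 0 0 ^ 2 + (b - c) * R.1 1 0 ^ 2 := by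
    have := sub_nonneg.2 (hcb.trans hba)
    have := sub_nonneg.2 hcb
    positivity
  linarith

def SO3.cyclicPerm : SO3 := ⟨!![0, 1, 0; 0, 0, 1; 1, 0, 0], by
  refine ⟨?_, by simp [Matrix.det_fin_three]⟩
  ext i j
  fin_cases i <;> fin_cases j <;> simp [Matrix.mul_apply, Fin.sum_univ_three]⟩

lemma firstColQuad_cyclicPerm (a b c : ℝ) : firstColQuad a b c SO3.cyclicPerm = c := by
  simp [firstColQuad, SO3.cyclicPerm]

theorem stmt_13_general (a b c : ℝ) (hba : b ≤ a) (hcb : c ≤ b) :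
    Filter.Tendsto (fun d : ℝ => -(1/d) * Real.log (Sbar (dg a b c) (dg d 0 0)))
      Filter.atTop (nhds c) := by
  have hmin (R : SO3) : firstColQuad a b c SO3.cyclicPerm ≤ firstColQuad a b c R := by
    rw [firstColQuad_cyclicPerm]
    exact le_firstColQuad hba hcb R
  simpa only [Sbar_dg_dg_eq_integral, firstColQuad_cyclicPerm] using
    tendsto_neg_inv_mul_log_integral_exp_neg_mul (μ := μSO3) (continuous_firstColQuad a b c) hmin

/-- exponential decay rate of `S̄(diag(a,b,c), diag(d,0,0))` is the smallest
eigenvalue `c`: `lim_{d→∞} −(1/d)·log S̄ = c`. -/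
theorem stmt_13 (a b c : ℝ) (hba : b ≤ a) (hcb : c ≤ b) (hc : 0 < c) :
    Filter.Tendsto (fun d : ℝ => -(1/d) * Real.log (Sbar (dg a b c) (dg d 0 0)))
      Filter.atTop (nhds c) :=
  stmt_13_general a b c hba hcb
end

section
/- Fix d > 0 and for a real symmetric 3×3 matrix D define c₁(D) = −(d/3)·tr(D), c₂(D) = (d²/30)·(tr(D)² + 2·tr(D²)), and c₃(D) = −(d³/630)·(tr(D)³ + 6·tr(D²)·tr(D) + 8·tr(D³)) (these are the first three Taylor coefficients at λ = 0 of λ ↦ S̄(D, λ·diag(d,0,0))). If D₁ and D₂ are real symmetric positive semi-definite 3×3 matrices with c₁(D₁) = c₁(D₂), c₂(D₁) = c₂(D₂) and c₃(D₁) = c₃(D₂), then D₁ and D₂ have the same characteristic polynomial, i.e. the same eigenvalues with multiplicity. -/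
open Matrix MeasureTheory

open Polynomial

/-! The data `c₁, c₂, c₃` are triangular in the power sums `tr D, tr D², tr D³` with nonzero
leading factors, so they determine these power sums; for a `3 × 3` matrix the power sums
determine the characteristic polynomial by Newton's identities. -/

theorem Matrix.charpoly_fin_three {K : Type*} [Field K] [CharZero K]
    (M : Matrix (Fin 3) (Fin 3) K) :
    M.charpoly = X ^ 3 - C M.trace * X ^ 2 + C ((M.trace ^ 2 - (M * M).trace) / 2) * X
      - C ((M.trace ^ 3 - 3 * (M * M).trace * M.trace + 2 * (M * M * M).trace) / 6) := by
  have e₂ : (M.trace ^ 2 - (M * M).trace) / 2 =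
      M 0 0 * M 1 1 + M 0 0 * M 2 2 + M 1 1 * M 2 2
        - M 0 1 * M 1 0 - M 0 2 * M 2 0 - M 1 2 * M 2 1 := by
    simp only [trace_fin_three, mul_apply, Fin.sum_univ_three]; ring
  have e₃ : (M.trace ^ 3 - 3 * (M * M).trace * M.trace + 2 * (M * M * M).trace) / 6 = M.det := by
    simp only [det_fin_three, trace_fin_three, mul_apply, Fin.sum_univ_three]; ring
  rw [e₂, e₃, charpoly, det_fin_three, det_fin_three]
  simp only [charmatrix_apply_eq, charmatrix_apply_ne, ne_eq, Fin.reduceEq, not_false_eq_true,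
    trace_fin_three, map_add, map_sub, map_mul]
  ring

theorem Matrix.charpoly_eq_of_trace_pow_eq_fin_three {K : Type*} [Field K] [CharZero K]
    {A B : Matrix (Fin 3) (Fin 3) K} (h₁ : A.trace = B.trace)
    (h₂ : (A * A).trace = (B * B).trace) (h₃ : (A * A * A).trace = (B * B * B).trace) :
    A.charpoly = B.charpoly := by
  rw [charpoly_fin_three, charpoly_fin_three, h₁, h₂, h₃]

theorem stmt_15_general (d : ℝ) (hd : 0 < d) (D₁ D₂ : Mat3)
    (hc1 : -(d/3) * D₁.trace = -(d/3) * D₂.trace)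
    (hc2 : (d^2/30) * (D₁.trace^2 + 2 * (D₁*D₁).trace) =
           (d^2/30) * (D₂.trace^2 + 2 * (D₂*D₂).trace))
    (hc3 : -(d^3/630) * (D₁.trace^3 + 6 * (D₁*D₁).trace * D₁.trace + 8 * (D₁*D₁*D₁).trace) =
           -(d^3/630) * (D₂.trace^3 + 6 * (D₂*D₂).trace * D₂.trace + 8 * (D₂*D₂*D₂).trace)) :
    D₁.charpoly = D₂.charpoly := by
  have t₁ : D₁.trace = D₂.trace := mul_left_cancel₀ (by simp [hd.ne']) hc1
  have t₂ : (D₁ * D₁).trace = (D₂ * D₂).trace := by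
    have h := mul_left_cancel₀ (by positivity) hc2
    rw [t₁] at h
    linarith
  have t₃ : (D₁ * D₁ * D₁).trace = (D₂ * D₂ * D₂).trace := by
    have h := mul_left_cancel₀ (by simp [hd.ne']) hc3
    rw [t₁, t₂] at h
    linarith
  exact charpoly_eq_of_trace_pow_eq_fin_three t₁ t₂ t₃

/-- the first three Taylor coefficients of `λ ↦ S̄(D, λ·diag(d,0,0))` determine a
positive semi-definite `D` up to its characteristic polynomial (eigenvalues with multiplicity). -/
theorem stmt_15 (d : ℝ) (hd : 0 < d) (D₁ D₂ : Mat3)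
    (h₁ : D₁.PosSemidef) (h₂ : D₂.PosSemidef)
    (hc1 : -(d/3) * D₁.trace = -(d/3) * D₂.trace)
    (hc2 : (d^2/30) * (D₁.trace^2 + 2 * (D₁*D₁).trace) =
           (d^2/30) * (D₂.trace^2 + 2 * (D₂*D₂).trace))
    (hc3 : -(d^3/630) * (D₁.trace^3 + 6 * (D₁*D₁).trace * D₁.trace + 8 * (D₁*D₁*D₁).trace) =
           -(d^3/630) * (D₂.trace^3 + 6 * (D₂*D₂).trace * D₂.trace + 8 * (D₂*D₂*D₂).trace)) :
    D₁.charpoly = D₂.charpoly :=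
  stmt_15_general d hd D₁ D₂ hc1 hc2 hc3
end
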